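/- Existence of an invariant occupation measure: let X be compact metric, H: Δ(X) ⇉ Δ(X) a closed-graph, nonempty-valued, linear correspondence. Suppose (z_m)_{m≥1} is a sequence in Δ(X) with z_{m+1} ∈ H(z_m) for all m. Then any weak* limit point μ* of the Cesàro averages (1/n)∑_{m=1}^n z_m satisfies μ* ∈ H(μ*). -/

import Mathlib

open MeasureTheory Filter Topology

open BoundedContinuousFunction

lemma coeff1 (n : ℕ) (hn : 1 ≤ n) :
    ENNReal.ofReal ((n:ℝ)/((n:ℝ)+1)) = (n : ENNReal) / ((n:ENNReal)+1) := by
  rw [ENNReal.ofReal_div_of_pos (by positivity)]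
  congr 1
  · exact ENNReal.ofReal_natCast n
  · rw [ENNReal.ofReal_add (by positivity) zero_le_one, ENNReal.ofReal_natCast,
      ENNReal.ofReal_one]

lemma coeff2 (n : ℕ) :
    ENNReal.ofReal (1 - (n:ℝ)/((n:ℝ)+1)) = ((n:ENNReal)+1)⁻¹ := by
  have h : (1 : ℝ) - (n:ℝ)/((n:ℝ)+1) = ((n:ℝ)+1)⁻¹ := by
    have : ((n:ℝ)+1) ≠ 0 := by positivity
    field_simp
    ring
  rw [h, ENNReal.ofReal_inv_of_pos (by positivity), ENNReal.ofReal_add (by positivity)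
    zero_le_one, ENNReal.ofReal_natCast, ENNReal.ofReal_one]

lemma avg_step {X : Type*} [MeasurableSpace X] (μ : ℕ → Measure X) (s n : ℕ) (hn : 1 ≤ n) :
    ((n:ENNReal)+1)⁻¹ • ∑ m ∈ Finset.Icc s (s+n), μ m
      = ENNReal.ofReal ((n:ℝ)/((n:ℝ)+1)) • ((n:ENNReal)⁻¹ • ∑ m ∈ Finset.Icc s (s+n-1), μ m)
        + ENNReal.ofReal (1 - (n:ℝ)/((n:ℝ)+1)) • μ (s+n) := by
  have hsn : s + n = (s + (n-1)) + 1 := by omega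
  have hsn' : s + n - 1 = s + (n-1) := by omega
  rw [hsn, Finset.sum_Icc_succ_top (by omega), Nat.add_sub_cancel, coeff1 n hn, coeff2 n, smul_smul,
    smul_add]
  have hc : (n : ENNReal) / ((n:ENNReal)+1) * (n:ENNReal)⁻¹ = ((n:ENNReal)+1)⁻¹ := by
    rw [div_eq_mul_inv, mul_right_comm, ENNReal.mul_inv_cancel (by exact_mod_cast Nat.one_le_iff_ne_zero.mp hn) (by simp), one_mul]
  rw [hc]

lemma isProb_avg {X : Type*} [MeasurableSpace X] (μ : ℕ → Measure X)
    [∀ m, IsProbabilityMeasure (μ m)] (s n : ℕ) (hn : 1 ≤ n) :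
    IsProbabilityMeasure ((n:ENNReal)⁻¹ • ∑ m ∈ Finset.Icc s (s+n-1), μ m) := by
  constructor
  rw [Measure.smul_apply, Measure.finset_sum_apply]
  simp only [measure_univ, Finset.sum_const, Nat.card_Icc, nsmul_eq_mul, mul_one, smul_eq_mul]
  rw [show s + n - 1 + 1 - s = n by omega]
  exact ENNReal.inv_mul_cancel (by exact_mod_cast Nat.one_le_iff_ne_zero.mp hn) (by simp)

lemma integral_avg {X : Type*} [MetricSpace X] [MeasurableSpace X] [BorelSpace X]
    (μ : ℕ → Measure X) (hμ : ∀ m, IsProbabilityMeasure (μ m)) (f : X →ᵇ ℝ) (s n : ℕ) :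
    ∫ x, f x ∂((n:ENNReal)⁻¹ • ∑ m ∈ Finset.Icc s (s+n-1), μ m)
      = (n:ℝ)⁻¹ * ∑ m ∈ Finset.Icc s (s+n-1), ∫ x, f x ∂(μ m) := by
  rw [integral_smul_measure, integral_finset_sum_measure
    (fun m _ => haveI := hμ m; f.integrable (μ m))]
  simp [ENNReal.toReal_inv]

lemma abs_integral_le_norm {X : Type*} [MetricSpace X] [MeasurableSpace X] [BorelSpace X]
    (μ : ProbabilityMeasure X) (f : X →ᵇ ℝ) : |∫ x, f x ∂(μ : Measure X)| ≤ ‖f‖ := by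
  rw [← Real.norm_eq_abs]
  exact f.norm_integral_le_norm (μ : Measure X)

/-- The convex combination `t·μ + (1−t)·ν` of two probability measures, as a measure. -/
noncomputable def pcomb {X : Type*} [MetricSpace X] [MeasurableSpace X]
    (t : ℝ) (μ ν : ProbabilityMeasure X) : Measure X :=
  ENNReal.ofReal t • (μ : Measure X) + ENNReal.ofReal (1 - t) • (ν : Measure X)

/-- existence of an invariant occupation measure. Let `X` be compact metric
and `H : Δ(X) ⇉ Δ(X)` a closed-graph, nonempty-valued, linear correspondence. If
`(z_m)_{m ≥ 1}` satisfies `z_{m+1} ∈ H(z_m)` for all `m ≥ 1`, then any weak* limit point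
`μ*` of the Cesàro averages `(1/n)∑_{m=1}^n z_m` satisfies `μ* ∈ H(μ*)`. -/
theorem invariant_occupation_measure
    {X : Type*} [MetricSpace X] [CompactSpace X] [MeasurableSpace X] [BorelSpace X]
    (H : ProbabilityMeasure X → Set (ProbabilityMeasure X))
    (hclosed : IsClosed
      {p : ProbabilityMeasure X × ProbabilityMeasure X | p.2 ∈ H p.1})
    (hne : ∀ z, (H z).Nonempty)
    (hlin : ∀ z z' : ProbabilityMeasure X, ∀ t ∈ Set.Icc (0 : ℝ) 1,
      ∀ w : ProbabilityMeasure X, (w : Measure X) = pcomb t z z' →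
        H w = {μ : ProbabilityMeasure X |
          ∃ a ∈ H z, ∃ b ∈ H z', (μ : Measure X) = pcomb t a b})
    (z : ℕ → ProbabilityMeasure X)
    (hz : ∀ m ≥ 1, z (m + 1) ∈ H (z m))
    (A : ℕ → ProbabilityMeasure X)
    (hA : ∀ n ≥ 1,
      (A n : Measure X) = (n : ENNReal)⁻¹ • ∑ m ∈ Finset.Icc 1 n, (z m : Measure X))
    (μstar : ProbabilityMeasure X)
    (hlim : ∃ φ : ℕ → ℕ, StrictMono φ ∧ (∀ k, 1 ≤ φ k) ∧
      Tendsto (fun k => A (φ k)) atTop (nhds μstar)) :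
    μstar ∈ H μstar := by
  classical
  obtain ⟨φ, hφ, hφ1, hAlim⟩ := hlim
  -- the shifted averages
  set Bm : ℕ → Measure X := fun n => (n:ENNReal)⁻¹ • ∑ m ∈ Finset.Icc 2 (n+1), (z m : Measure X)
    with hBmdef
  have hIcc : ∀ n : ℕ, 1 ≤ n → Finset.Icc 2 (n+1) = Finset.Icc 2 (2+n-1) := by
    intro n hn; congr 1; omega
  have hBmprob : ∀ n, 1 ≤ n → IsProbabilityMeasure (Bm n) := by
    intro n hn
    rw [hBmdef]; dsimp only
    rw [hIcc n hn]
    exact isProb_avg (fun m => (z m : Measure X)) 2 n hn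
  let B : ℕ → ProbabilityMeasure X := fun n =>
    if h : 1 ≤ n then ⟨Bm n, hBmprob n h⟩ else z 0
  have hB : ∀ n, 1 ≤ n → (B n : Measure X) = Bm n := by
    intro n h; simp only [B, dif_pos h]; exact (congrArg (fun p : ProbabilityMeasure X => (p : Measure X)) (dif_pos h)).trans rfl
  -- Key induction: B n ∈ H (A n)
  have key : ∀ n, 1 ≤ n → B n ∈ H (A n) := by
    intro n hn
    induction n with
    | zero => omega
    | succ n ih =>
      rcases Nat.lt_or_ge n 1 with h1 | hn1
      · -- base case n = 0
        have hn0 : n = 0 := by omega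
        subst hn0
        have hA1 : A 1 = z 1 := by
          apply MeasureTheory.ProbabilityMeasure.toMeasure_injective
          rw [hA 1 le_rfl]; simp
        have hB1 : B 1 = z 2 := by
          apply MeasureTheory.ProbabilityMeasure.toMeasure_injective
          rw [hB 1 le_rfl, hBmdef]; simp
        rw [hA1, hB1]
        exact hz 1 le_rfl
      · have hAn := ih hn1
        set t : ℝ := (n:ℝ)/((n:ℝ)+1) with htdef
        have ht : t ∈ Set.Icc (0:ℝ) 1 := by
          constructor
          · positivity
          · rw [htdef, div_le_one (by positivity)]; linarith
        have hw : (A (n+1) : Measure X) = pcomb t (A n) (z (n+1)) := by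
          rw [hA (n+1) (by omega)]
          simp only [pcomb]
          rw [hA n hn1]
          have := avg_step (fun m => (z m : Measure X)) 1 n hn1
          rw [show 1 + n = n + 1 by omega] at this
          simp only [Nat.add_sub_cancel] at this
          rw [show ((n+1:ℕ) : ENNReal) = ((n:ENNReal)+1) by push_cast; ring]
          exact this
        rw [hlin (A n) (z (n+1)) t ht (A (n+1)) hw]
        refine ⟨B n, hAn, z (n+2), hz (n+1) (by omega), ?_⟩
        rw [hB (n+1) (by omega)]
        simp only [pcomb]
        rw [hB n hn1, hBmdef]
        dsimp only
        have := avg_step (fun m => (z m : Measure X)) 2 n hn1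
        rw [show 2 + n = n + 2 by omega] at this
        rw [show n + 2 - 1 = n + 1 by omega] at this
        rw [show ((n+1:ℕ) : ENNReal) = ((n:ENNReal)+1) by push_cast; ring]
        exact this
  -- B (φ k) also tends to μstar
  have hBlim : Tendsto (fun k => B (φ k)) atTop (𝓝 μstar) := by
    rw [MeasureTheory.ProbabilityMeasure.tendsto_iff_forall_integral_tendsto]
    intro f
    have hAf := MeasureTheory.ProbabilityMeasure.tendsto_iff_forall_integral_tendsto.mp hAlim f
    set I : ℕ → ℝ := fun m => ∫ x, f x ∂(z m : Measure X) with hIdef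
    have hIbd : ∀ m, |I m| ≤ ‖f‖ := fun m => abs_integral_le_norm (z m) f
    have hAint : ∀ n, 1 ≤ n →
        ∫ x, f x ∂(A n : Measure X) = (n:ℝ)⁻¹ * ∑ m ∈ Finset.Icc 1 n, I m := by
      intro n hn
      rw [hA n hn, show Finset.Icc 1 n = Finset.Icc 1 (1+n-1) by congr 1; omega]
      exact integral_avg (fun m => (z m : Measure X)) (fun m => (z m).2) f 1 n
    have hBint : ∀ n, 1 ≤ n →
        ∫ x, f x ∂(B n : Measure X) = (n:ℝ)⁻¹ * ∑ m ∈ Finset.Icc 2 (n+1), I m := by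
      intro n hn
      rw [hB n hn, hBmdef]
      dsimp only
      rw [show Finset.Icc 2 (n+1) = Finset.Icc 2 (2+n-1) by congr 1; omega]
      exact integral_avg (fun m => (z m : Measure X)) (fun m => (z m).2) f 2 n
    have hsum : ∀ n : ℕ, 1 ≤ n →
        ∑ m ∈ Finset.Icc 2 (n+1), I m = (∑ m ∈ Finset.Icc 1 n, I m) + (I (n+1) - I 1) := by
      intro n hn
      have h1 : Finset.Icc 1 (n+1) = insert 1 (Finset.Icc 2 (n+1)) := by
        ext m; simp [Finset.mem_Icc, Finset.mem_insert]; omega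
      have h2 : ∑ m ∈ Finset.Icc 1 (n+1), I m = I 1 + ∑ m ∈ Finset.Icc 2 (n+1), I m := by
        rw [h1, Finset.sum_insert (by simp)]
      have h3 : ∑ m ∈ Finset.Icc 1 (n+1), I m = (∑ m ∈ Finset.Icc 1 n, I m) + I (n+1) :=
        Finset.sum_Icc_succ_top (by omega) I
      linarith
    set d : ℕ → ℝ := fun k => ((φ k : ℝ))⁻¹ * (I (φ k + 1) - I 1) with hddef
    have heq : ∀ k, ∫ x, f x ∂(B (φ k) : Measure X) = ∫ x, f x ∂(A (φ k) : Measure X) + d k := by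
      intro k
      rw [hAint (φ k) (hφ1 k), hBint (φ k) (hφ1 k), hsum (φ k) (hφ1 k), hddef]
      ring
    have hd0 : Tendsto d atTop (𝓝 0) := by
      apply squeeze_zero_norm' (a := fun k : ℕ => 2 * ‖f‖ / k)
      · filter_upwards [eventually_ge_atTop 1] with k hk
        have hφk : (1:ℝ) ≤ (k:ℝ) := by exact_mod_cast hk
        have hφk2 : (k:ℝ) ≤ (φ k : ℝ) := by exact_mod_cast hφ.le_apply
        have hpos : (0:ℝ) < (φ k : ℝ) := by linarith
        rw [hddef]
        dsimp only
        rw [Real.norm_eq_abs, abs_mul, abs_inv, abs_of_pos hpos]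
        have habs : |I (φ k + 1) - I 1| ≤ 2 * ‖f‖ := by
          have := hIbd (φ k + 1); have := hIbd 1
          have := abs_sub (I (φ k + 1)) (I 1)
          calc |I (φ k + 1) - I 1| ≤ |I (φ k + 1)| + |I 1| := abs_sub _ _
            _ ≤ 2 * ‖f‖ := by linarith [hIbd (φ k + 1), hIbd 1]
        have hinv : ((φ k : ℝ))⁻¹ ≤ (k:ℝ)⁻¹ := by
          apply inv_anti₀ (by linarith) hφk2
        calc ((φ k : ℝ))⁻¹ * |I (φ k + 1) - I 1| ≤ (k:ℝ)⁻¹ * (2 * ‖f‖) := by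
              apply mul_le_mul hinv habs (abs_nonneg _) (by positivity)
          _ = 2 * ‖f‖ / k := by ring
      · exact tendsto_const_div_atTop_nhds_zero_nat (2 * ‖f‖)
    have := hAf.add hd0
    rw [add_zero] at this
    exact this.congr (fun k => (heq k).symm)
  have hpair : Tendsto (fun k => (A (φ k), B (φ k))) atTop (𝓝 (μstar, μstar)) :=
    hAlim.prodMk_nhds hBlim
  exact hclosed.mem_of_tendsto hpair (Eventually.of_forall fun k => key (φ k) (hφ1 k))
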